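/- arXiv:2601.22901 — 7 statements merged into one kernel-verified Lean document; each statement's English description precedes it below -/
import Mathlib

section
/- Let V_star be the unique fixed point of the truncated Bellman operator T_A on real-valued functions on the grid G_A = {0,…,A} × {0,…,A}. Then there exists a nondecreasing function τ : ℕ → {−∞} ∪ ℕ ∪ {+∞} (with the obvious order) such that for every (a,b) ∈ G_A with a ≥ b, one has Q_sense^A V_star (a,b) ≤ Q_comm^A V_star (a,b) if and only if a ≤ τ(b). In other words, the greedy (optimal stationary) policy with respect to V_star senses exactly when a ≤ τ(b) and communicates otherwise, with a monotone nondecreasing switching curve. -/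
noncomputable def QsenseA (A : ℕ) (γ lams cs : ℝ) (V : ℕ × ℕ → ℝ) (p : ℕ × ℕ) : ℝ :=
  (p.1 : ℝ) + cs +
    γ * (lams * V (min (p.1 + 1) A, 1) + (1 - lams) * V (min (p.1 + 1) A, min (p.2 + 1) A))

noncomputable def QcommA (A : ℕ) (γ lamc cc : ℝ) (V : ℕ × ℕ → ℝ) (p : ℕ × ℕ) : ℝ :=
  (p.1 : ℝ) + cc +
    γ * (lamc * V (min (p.2 + 1) A, min (p.2 + 1) A) +
      (1 - lamc) * V (min (p.1 + 1) A, min (p.2 + 1) A))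

noncomputable def TbellA (A : ℕ) (γ lams lamc cs cc : ℝ) (V : ℕ × ℕ → ℝ) : ℕ × ℕ → ℝ :=
  fun p => min (QsenseA A γ lams cs V p) (QcommA A γ lamc cc V p)

/-- `V` is a fixed point of the truncated Bellman operator on the grid `G_A`. -/
def IsFixedOnGrid (A : ℕ) (γ lams lamc cs cc : ℝ) (V : ℕ × ℕ → ℝ) : Prop :=
  ∀ a b : ℕ, a ≤ A → b ≤ A → TbellA A γ lams lamc cs cc V (a, b) = V (a, b)

/-- The structural properties preserved by the Bellman operator: monotone in each
coordinate, and the key submodular-type inequality `P*`. -/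
def GoodV (A : ℕ) (lams lamc : ℝ) (V : ℕ × ℕ → ℝ) : Prop :=
  (∀ a b : ℕ, a + 1 ≤ A → b ≤ A → V (a, b) ≤ V (a + 1, b)) ∧
  (∀ a b : ℕ, a ≤ A → b + 1 ≤ A → V (a, b) ≤ V (a, b + 1)) ∧
  (∀ b x : ℕ, b + 1 ≤ x → x ≤ A →
    (lamc - lams) * (V (x, b + 1) - V (x, b)) ≤ lamc * (V (b + 1, b + 1) - V (b, b)))

lemma goodV_mono1 {A : ℕ} {lams lamc : ℝ} {V : ℕ × ℕ → ℝ} (hV : GoodV A lams lamc V)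
    {a a' b : ℕ} (h : a ≤ a') (h' : a' ≤ A) (hb : b ≤ A) : V (a, b) ≤ V (a', b) := by
  induction a', h using Nat.le_induction with
  | base => exact le_refl _
  | succ n hn ih =>
      exact (ih (by omega)).trans (hV.1 n b h' hb)

lemma goodV_mono2 {A : ℕ} {lams lamc : ℝ} {V : ℕ × ℕ → ℝ} (hV : GoodV A lams lamc V)
    {a b b' : ℕ} (h : b ≤ b') (h' : b' ≤ A) (ha : a ≤ A) : V (a, b) ≤ V (a, b') := by
  induction b', h using Nat.le_induction with
  | base => exact le_refl _
  | succ n hn ih =>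
      exact (ih (by omega)).trans (hV.2.1 a n ha h')

lemma goodV_diag {A : ℕ} {lams lamc : ℝ} {V : ℕ × ℕ → ℝ} (hV : GoodV A lams lamc V)
    {b b' : ℕ} (h : b ≤ b') (h' : b' ≤ A) : V (b, b) ≤ V (b', b') :=
  (goodV_mono1 hV h h' (h.trans h')).trans (goodV_mono2 hV h h' h')

lemma core_ineq (γ lams lamc e d g : ℝ) (hγ0 : 0 < γ) (hs0 : 0 ≤ lams) (hsc : lams ≤ lamc)
    (hc1 : lamc ≤ 1) (he : 0 ≤ e) (hd : 0 ≤ d) (hg : 0 ≤ g)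
    (hP : (lamc - lams) * e ≤ lamc * d) :
    ((lamc - lams) * (γ * (1 - lams) * e) ≤ lamc * (1 + γ * (lams * g + (1 - lams) * d))) ∧
    ((lamc - lams) * (γ * (1 - lams) * e) ≤ lamc * (1 + γ * d)) ∧
    ((lamc - lams) * (γ * (lamc * d + (1 - lamc) * e)) ≤
      lamc * (1 + γ * (lams * g + (1 - lams) * d))) ∧
    ((lamc - lams) * (γ * (lamc * d + (1 - lamc) * e)) ≤ lamc * (1 + γ * d)) := by
  have hc0 : 0 ≤ lamc := hs0.trans hsc
  have hs1 : lams ≤ 1 := hsc.trans hc1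
  have A1 : γ * (1 - lams) * ((lamc - lams) * e) ≤ γ * (1 - lams) * (lamc * d) :=
    mul_le_mul_of_nonneg_left hP (by nlinarith)
  have B1 : γ * (1 - lamc) * ((lamc - lams) * e) ≤ γ * (1 - lamc) * (lamc * d) :=
    mul_le_mul_of_nonneg_left hP (by nlinarith)
  have A2 : 0 ≤ γ * lams * (lamc * d) := by positivity
  have A3 : 0 ≤ γ * lamc * (lams * g) := by positivity
  refine ⟨by nlinarith, by nlinarith, by nlinarith, by nlinarith⟩

lemma goodV_step {A : ℕ} {γ lams lamc cs cc : ℝ} {V : ℕ × ℕ → ℝ}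
    (hγ0 : 0 < γ) (hγ1 : γ < 1) (hs0 : 0 ≤ lams) (hsc : lams ≤ lamc) (hc1 : lamc ≤ 1)
    (hA : 1 ≤ A) (hV : GoodV A lams lamc V) :
    GoodV A lams lamc (TbellA A γ lams lamc cs cc V) := by
  have hc0 : 0 ≤ lamc := hs0.trans hsc
  have hs1 : lams ≤ 1 := hsc.trans hc1
  have hγ := hγ0.le
  refine ⟨?_, ?_, ?_⟩
  · -- monotone in first coordinate
    intro a b ha hb
    refine min_le_min ?_ ?_
    · simp only [QsenseA]
      have h1 : V (min (a + 1) A, 1) ≤ V (min (a + 1 + 1) A, 1) :=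
        goodV_mono1 hV (min_le_min (by omega) le_rfl) (min_le_right _ _) hA
      have h2 : V (min (a + 1) A, min (b + 1) A) ≤ V (min (a + 1 + 1) A, min (b + 1) A) :=
        goodV_mono1 hV (min_le_min (by omega) le_rfl) (min_le_right _ _) (min_le_right _ _)
      have C1 := mul_le_mul_of_nonneg_left h1 (by positivity : (0:ℝ) ≤ γ * lams)
      have C2 := mul_le_mul_of_nonneg_left h2 (by nlinarith : (0:ℝ) ≤ γ * (1 - lams))
      push_cast
      nlinarith
    · simp only [QcommA]
      have h2 : V (min (a + 1) A, min (b + 1) A) ≤ V (min (a + 1 + 1) A, min (b + 1) A) :=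
        goodV_mono1 hV (min_le_min (by omega) le_rfl) (min_le_right _ _) (min_le_right _ _)
      have C2 := mul_le_mul_of_nonneg_left h2 (by nlinarith : (0:ℝ) ≤ γ * (1 - lamc))
      push_cast
      nlinarith
  · -- monotone in second coordinate
    intro a b ha hb
    refine min_le_min ?_ ?_
    · simp only [QsenseA]
      have h2 : V (min (a + 1) A, min (b + 1) A) ≤ V (min (a + 1) A, min (b + 1 + 1) A) :=
        goodV_mono2 hV (min_le_min (by omega) le_rfl) (min_le_right _ _) (min_le_right _ _)
      have C2 := mul_le_mul_of_nonneg_left h2 (by nlinarith : (0:ℝ) ≤ γ * (1 - lams))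
      nlinarith
    · simp only [QcommA]
      have h2 : V (min (a + 1) A, min (b + 1) A) ≤ V (min (a + 1) A, min (b + 1 + 1) A) :=
        goodV_mono2 hV (min_le_min (by omega) le_rfl) (min_le_right _ _) (min_le_right _ _)
      have hd : V (min (b + 1) A, min (b + 1) A) ≤ V (min (b + 1 + 1) A, min (b + 1 + 1) A) :=
        goodV_diag hV (min_le_min (by omega) le_rfl) (min_le_right _ _)
      have C1 := mul_le_mul_of_nonneg_left hd (by positivity : (0:ℝ) ≤ γ * lamc)
      have C2 := mul_le_mul_of_nonneg_left h2 (by nlinarith : (0:ℝ) ≤ γ * (1 - lamc))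
      nlinarith
  · -- property P*
    intro b x hbx hxA
    have hbA : b + 1 ≤ A := hbx.trans hxA
    set sx := min (x + 1) A with hsx
    set sb1 := min (b + 1 + 1) A with hsb1
    have hsxA : sx ≤ A := min_le_right _ _
    have hsb1A : sb1 ≤ A := min_le_right _ _
    have hbsb1 : b + 1 ≤ sb1 := le_min (by omega) hbA
    have hminb : min (b + 1) A = b + 1 := min_eq_left hbA
    have he : 0 ≤ V (sx, sb1) - V (sx, b + 1) :=
      sub_nonneg.2 (goodV_mono2 hV hbsb1 hsb1A hsxA)
    have hd : 0 ≤ V (sb1, sb1) - V (b + 1, b + 1) :=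
      sub_nonneg.2 (goodV_diag hV hbsb1 hsb1A)
    have hg : 0 ≤ V (sb1, 1) - V (b + 1, 1) :=
      sub_nonneg.2 (goodV_mono1 hV hbsb1 hsb1A hA)
    have hP : (lamc - lams) * (V (sx, sb1) - V (sx, b + 1)) ≤
        lamc * (V (sb1, sb1) - V (b + 1, b + 1)) := by
      rcases le_or_gt (b + 1 + 1) A with h | h
      · have h1 : sb1 = b + 1 + 1 := min_eq_left h
        rw [h1]
        exact hV.2.2 (b + 1) sx (le_min (by omega) h) hsxA
      · have h1 : sb1 = b + 1 := by omega
        rw [h1]; simp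
    obtain ⟨K1, K2, K3, K4⟩ := core_ineq γ lams lamc _ _ _ hγ0 hs0 hsc hc1 he hd hg hP
    -- Q values and difference formulas
    have e1 : QsenseA A γ lams cs V (x, b + 1) - QsenseA A γ lams cs V (x, b) =
        γ * (1 - lams) * (V (sx, sb1) - V (sx, b + 1)) := by
      simp only [QsenseA, hminb, ← hsx, ← hsb1]; ring
    have e2 : QcommA A γ lamc cc V (x, b + 1) - QcommA A γ lamc cc V (x, b) =
        γ * (lamc * (V (sb1, sb1) - V (b + 1, b + 1)) +
          (1 - lamc) * (V (sx, sb1) - V (sx, b + 1))) := by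
      simp only [QcommA, hminb, ← hsx, ← hsb1]; ring
    have e3 : QsenseA A γ lams cs V (b + 1, b + 1) - QsenseA A γ lams cs V (b, b) =
        1 + γ * (lams * (V (sb1, 1) - V (b + 1, 1)) +
          (1 - lams) * (V (sb1, sb1) - V (b + 1, b + 1))) := by
      simp only [QsenseA, hminb, ← hsb1]; push_cast; ring
    have e4 : QcommA A γ lamc cc V (b + 1, b + 1) - QcommA A γ lamc cc V (b, b) =
        1 + γ * (V (sb1, sb1) - V (b + 1, b + 1)) := by
      simp only [QcommA, hminb, ← hsb1]; push_cast; ring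
    have hms : (0:ℝ) ≤ lamc - lams := by linarith
    simp only [TbellA]
    set Qs0 := QsenseA A γ lams cs V (x, b) with hQs0
    set Qc0 := QcommA A γ lamc cc V (x, b) with hQc0
    set Qs1 := QsenseA A γ lams cs V (x, b + 1) with hQs1
    set Qc1 := QcommA A γ lamc cc V (x, b + 1) with hQc1
    set Rs := QsenseA A γ lams cs V (b + 1, b + 1) with hRs
    set Rc := QcommA A γ lamc cc V (b + 1, b + 1) with hRc
    set Ss := QsenseA A γ lams cs V (b, b) with hSs
    set Sc := QcommA A γ lamc cc V (b, b) with hSc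
    rcases min_cases Qs0 Qc0 with ⟨hm, _⟩ | ⟨hm, _⟩ <;>
      rcases min_cases Rs Rc with ⟨hm', _⟩ | ⟨hm', _⟩ <;> rw [hm, hm']
    · have G1 : (lamc - lams) * (min Qs1 Qc1 - Qs0) ≤ (lamc - lams) * (Qs1 - Qs0) :=
        mul_le_mul_of_nonneg_left (by linarith [min_le_left Qs1 Qc1]) hms
      have G2 : lamc * (Rs - Ss) ≤ lamc * (Rs - min Ss Sc) :=
        mul_le_mul_of_nonneg_left (by linarith [min_le_left Ss Sc]) hc0
      have C := K1; rw [← e1, ← e3] at C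
      linarith
    · have G1 : (lamc - lams) * (min Qs1 Qc1 - Qs0) ≤ (lamc - lams) * (Qs1 - Qs0) :=
        mul_le_mul_of_nonneg_left (by linarith [min_le_left Qs1 Qc1]) hms
      have G2 : lamc * (Rc - Sc) ≤ lamc * (Rc - min Ss Sc) :=
        mul_le_mul_of_nonneg_left (by linarith [min_le_right Ss Sc]) hc0
      have C := K2; rw [← e1, ← e4] at C
      linarith
    · have G1 : (lamc - lams) * (min Qs1 Qc1 - Qc0) ≤ (lamc - lams) * (Qc1 - Qc0) :=
        mul_le_mul_of_nonneg_left (by linarith [min_le_right Qs1 Qc1]) hms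
      have G2 : lamc * (Rs - Ss) ≤ lamc * (Rs - min Ss Sc) :=
        mul_le_mul_of_nonneg_left (by linarith [min_le_left Ss Sc]) hc0
      have C := K3; rw [← e2, ← e3] at C
      linarith
    · have G1 : (lamc - lams) * (min Qs1 Qc1 - Qc0) ≤ (lamc - lams) * (Qc1 - Qc0) :=
        mul_le_mul_of_nonneg_left (by linarith [min_le_right Qs1 Qc1]) hms
      have G2 : lamc * (Rc - Sc) ≤ lamc * (Rc - min Ss Sc) :=
        mul_le_mul_of_nonneg_left (by linarith [min_le_right Ss Sc]) hc0
      have C := K4; rw [← e2, ← e4] at C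
      linarith

lemma goodV_zero (A : ℕ) (lams lamc : ℝ) : GoodV A lams lamc (fun _ => 0) := by
  refine ⟨fun _ _ _ _ => le_rfl, fun _ _ _ _ => le_rfl, fun _ _ _ _ => by simp⟩

lemma goodV_iter {A : ℕ} {γ lams lamc cs cc : ℝ}
    (hγ0 : 0 < γ) (hγ1 : γ < 1) (hs0 : 0 ≤ lams) (hsc : lams ≤ lamc) (hc1 : lamc ≤ 1)
    (hA : 1 ≤ A) (n : ℕ) :
    GoodV A lams lamc ((TbellA A γ lams lamc cs cc)^[n] (fun _ => 0)) := by
  induction n with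
  | zero => exact goodV_zero A lams lamc
  | succ n ih =>
      rw [Function.iterate_succ_apply']
      exact goodV_step hγ0 hγ1 hs0 hsc hc1 hA ih

lemma tendsto_zero_aux {X : ℝ} {γ : ℝ} (hγ0 : 0 ≤ γ) (hγ1 : γ < 1) (K : ℝ)
    (h : ∀ n : ℕ, X ≤ γ ^ n * K) : X ≤ 0 := by
  by_contra hX
  push_neg at hX
  have ht : Filter.Tendsto (fun n : ℕ => γ ^ n * K) Filter.atTop (nhds 0) := by
    simpa using (tendsto_pow_atTop_nhds_zero_of_lt_one hγ0 hγ1).mul_const K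
  obtain ⟨n, hn⟩ := (ht.eventually (gt_mem_nhds hX)).exists
  exact absurd (h n) (not_le.2 hn)

lemma iter_close {A : ℕ} {γ lams lamc cs cc : ℝ} {Vstar : ℕ × ℕ → ℝ} {C : ℝ}
    (hγ0 : 0 < γ) (hs0 : 0 ≤ lams) (hsc : lams ≤ lamc) (hc1 : lamc ≤ 1)
    (hA : 1 ≤ A) (hfix : IsFixedOnGrid A γ lams lamc cs cc Vstar)
    (hC : ∀ a b : ℕ, a ≤ A → b ≤ A → |Vstar (a, b)| ≤ C) :
    ∀ n a b, a ≤ A → b ≤ A →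
      |((TbellA A γ lams lamc cs cc)^[n] (fun _ => 0)) (a, b) - Vstar (a, b)| ≤ γ ^ n * C := by
  have hc0 : 0 ≤ lamc := hs0.trans hsc
  have hs1 : lams ≤ 1 := hsc.trans hc1
  intro n
  induction n with
  | zero =>
      intro a b ha hb
      simpa using hC a b ha hb
  | succ n ih =>
      intro a b ha hb
      rw [Function.iterate_succ_apply', ← hfix a b ha hb]
      set U := (TbellA A γ lams lamc cs cc)^[n] (fun _ => 0) with hU
      have h1 : |U (min (a + 1) A, 1) - Vstar (min (a + 1) A, 1)| ≤ γ ^ n * C :=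
        ih _ _ (min_le_right _ _) hA
      have h2 : |U (min (a + 1) A, min (b + 1) A) - Vstar (min (a + 1) A, min (b + 1) A)| ≤
          γ ^ n * C := ih _ _ (min_le_right _ _) (min_le_right _ _)
      have h3 : |U (min (b + 1) A, min (b + 1) A) - Vstar (min (b + 1) A, min (b + 1) A)| ≤
          γ ^ n * C := ih _ _ (min_le_right _ _) (min_le_right _ _)
      have habs : ∀ (lam u w : ℝ), 0 ≤ lam → lam ≤ 1 → |u| ≤ γ ^ n * C → |w| ≤ γ ^ n * C →
          |γ * (lam * u + (1 - lam) * w)| ≤ γ ^ (n + 1) * C := by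
        intro lam u w hl0 hl1 hu hw
        rw [abs_mul, abs_of_nonneg hγ0.le]
        have : |lam * u + (1 - lam) * w| ≤ lam * (γ ^ n * C) + (1 - lam) * (γ ^ n * C) := by
          refine (abs_add_le _ _).trans (add_le_add ?_ ?_)
          · rw [abs_mul, abs_of_nonneg hl0]
            exact mul_le_mul_of_nonneg_left hu hl0
          · rw [abs_mul, abs_of_nonneg (by linarith)]
            exact mul_le_mul_of_nonneg_left hw (by linarith)
        calc γ * |lam * u + (1 - lam) * w| ≤ γ * (lam * (γ ^ n * C) + (1 - lam) * (γ ^ n * C)) :=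
              mul_le_mul_of_nonneg_left this hγ0.le
          _ = γ ^ (n + 1) * C := by ring
      have es : QsenseA A γ lams cs U (a, b) - QsenseA A γ lams cs Vstar (a, b) =
          γ * (lams * (U (min (a + 1) A, 1) - Vstar (min (a + 1) A, 1)) +
            (1 - lams) * (U (min (a + 1) A, min (b + 1) A) -
              Vstar (min (a + 1) A, min (b + 1) A))) := by
        simp only [QsenseA]; ring
      have ec : QcommA A γ lamc cc U (a, b) - QcommA A γ lamc cc Vstar (a, b) =
          γ * (lamc * (U (min (b + 1) A, min (b + 1) A) -
              Vstar (min (b + 1) A, min (b + 1) A)) +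
            (1 - lamc) * (U (min (a + 1) A, min (b + 1) A) -
              Vstar (min (a + 1) A, min (b + 1) A))) := by
        simp only [QcommA]; ring
      refine le_trans (abs_min_sub_min_le_max _ _ _ _) (max_le ?_ ?_)
      · rw [es]; exact habs lams _ _ hs0 hs1 h1 h2
      · rw [ec]; exact habs lamc _ _ hc0 hc1 h3 h2

lemma lin_bound (lam x y M : ℝ) (h0 : 0 ≤ lam) (h1 : lam ≤ 1) (hx : |x| ≤ M) (hy : |y| ≤ M) :
    lam * (x - y) ≤ 2 * M := by
  have hx' := abs_le.mp hx
  have hy' := abs_le.mp hy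
  have h2 : x - y ≤ 2 * M := by linarith
  have h3 := mul_le_mul_of_nonneg_left h2 h0
  nlinarith [mul_nonneg (sub_nonneg.2 h1) (show (0:ℝ) ≤ 2 * M by linarith)]

lemma goodV_star {A : ℕ} {γ lams lamc cs cc : ℝ} {Vstar : ℕ × ℕ → ℝ}
    (hγ0 : 0 < γ) (hγ1 : γ < 1) (hs0 : 0 ≤ lams) (hsc : lams ≤ lamc) (hc1 : lamc ≤ 1)
    (hA : 1 ≤ A) (hfix : IsFixedOnGrid A γ lams lamc cs cc Vstar) :
    GoodV A lams lamc Vstar := by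
  have hc0 : 0 ≤ lamc := hs0.trans hsc
  have hms : 0 ≤ lamc - lams := by linarith
  have hms1 : lamc - lams ≤ 1 := by linarith
  obtain ⟨C, hC⟩ : ∃ C : ℝ, ∀ a b : ℕ, a ≤ A → b ≤ A → |Vstar (a, b)| ≤ C := by
    refine ⟨(Finset.Icc 0 A ×ˢ Finset.Icc 0 A).sup' ⟨(0, 0), by simp⟩ fun p => |Vstar p|,
      fun a b ha hb => ?_⟩
    exact Finset.le_sup' (f := fun p => |Vstar p|) (by simp [Finset.mem_product, ha, hb])
  have hcl := iter_close hγ0 hs0 hsc hc1 hA hfix hC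
  have hCpos : 0 ≤ C := (abs_nonneg _).trans (hC 0 0 (by omega) (by omega))
  have hgood := fun n => goodV_iter (A := A) (γ := γ) (lams := lams) (lamc := lamc)
    (cs := cs) (cc := cc) hγ0 hγ1 hs0 hsc hc1 hA n
  have hM : ∀ n : ℕ, 0 ≤ γ ^ n * C := fun n => mul_nonneg (pow_nonneg hγ0.le n) hCpos
  refine ⟨?_, ?_, ?_⟩
  · intro a b ha hb
    rw [← sub_nonpos]
    refine tendsto_zero_aux hγ0.le hγ1 (4 * C) fun n => ?_
    set U := (TbellA A γ lams lamc cs cc)^[n] (fun _ => 0) with hU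
    have h0 := (hgood n).1 a b ha hb
    have d1 := hcl n a b (by omega) hb
    have d2 := hcl n (a + 1) b ha hb
    have lb := lin_bound 1 (Vstar (a, b) - U (a, b)) (Vstar (a + 1, b) - U (a + 1, b))
      (γ ^ n * C) (by norm_num) (by norm_num) (by rwa [abs_sub_comm]) (by rwa [abs_sub_comm])
    have := hM n
    nlinarith [lb]
  · intro a b ha hb
    rw [← sub_nonpos]
    refine tendsto_zero_aux hγ0.le hγ1 (4 * C) fun n => ?_
    set U := (TbellA A γ lams lamc cs cc)^[n] (fun _ => 0) with hU
    have h0 := (hgood n).2.1 a b ha hb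
    have d1 := hcl n a b ha (by omega)
    have d2 := hcl n a (b + 1) ha hb
    have lb := lin_bound 1 (Vstar (a, b) - U (a, b)) (Vstar (a, b + 1) - U (a, b + 1))
      (γ ^ n * C) (by norm_num) (by norm_num) (by rwa [abs_sub_comm]) (by rwa [abs_sub_comm])
    have := hM n
    nlinarith [lb]
  · intro b x hbx hxA
    have hbA : b + 1 ≤ A := hbx.trans hxA
    rw [← sub_nonpos]
    refine tendsto_zero_aux hγ0.le hγ1 (4 * C) fun n => ?_
    set U := (TbellA A γ lams lamc cs cc)^[n] (fun _ => 0) with hU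
    have h0 := (hgood n).2.2 b x hbx hxA
    have d1 := hcl n x (b + 1) hxA hbA
    have d2 := hcl n x b hxA (by omega)
    have d3 := hcl n (b + 1) (b + 1) hbA hbA
    have d4 := hcl n b b (by omega) (by omega)
    have lb1 := lin_bound (lamc - lams) (Vstar (x, b + 1) - U (x, b + 1))
      (Vstar (x, b) - U (x, b)) (γ ^ n * C) hms hms1
      (by rwa [abs_sub_comm]) (by rwa [abs_sub_comm])
    have lb2 := lin_bound lamc (Vstar (b, b) - U (b, b))
      (Vstar (b + 1, b + 1) - U (b + 1, b + 1)) (γ ^ n * C) hc0 hc1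
      (by rwa [abs_sub_comm]) (by rwa [abs_sub_comm])
    have := hM n
    nlinarith [lb1, lb2, h0]

lemma goodV_Pshift {A : ℕ} {lams lamc : ℝ} {V : ℕ × ℕ → ℝ} (hG : GoodV A lams lamc V)
    {b x : ℕ} (hbx : b + 1 ≤ x) (hxA : x ≤ A) :
    (lamc - lams) * (V (min (x + 1) A, min (b + 1 + 1) A) - V (min (x + 1) A, b + 1)) ≤
      lamc * (V (min (b + 1 + 1) A, min (b + 1 + 1) A) - V (b + 1, b + 1)) := by
  have hbA : b + 1 ≤ A := hbx.trans hxA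
  rcases le_or_gt (b + 1 + 1) A with h | h
  · rw [min_eq_left h]
    exact hG.2.2 (b + 1) (min (x + 1) A) (le_min (by omega) h) (min_le_right _ _)
  · have h1 : min (b + 1 + 1) A = b + 1 := by omega
    rw [h1]; simp

lemma step_down {A : ℕ} {γ lams lamc cs cc : ℝ} {V : ℕ × ℕ → ℝ}
    (hγ0 : 0 < γ) (hs0 : 0 ≤ lams) (hsc : lams ≤ lamc) (hc1 : lamc ≤ 1) (hA : 1 ≤ A)
    (hG : GoodV A lams lamc V) {a b : ℕ} (ha : a + 1 ≤ A) (hb : b ≤ A)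
    (h : QsenseA A γ lams cs V (a + 1, b) ≤ QcommA A γ lamc cc V (a + 1, b)) :
    QsenseA A γ lams cs V (a, b) ≤ QcommA A γ lamc cc V (a, b) := by
  have h1 : V (min (a + 1) A, 1) ≤ V (min (a + 1 + 1) A, 1) :=
    goodV_mono1 hG (min_le_min (by omega) le_rfl) (min_le_right _ _) hA
  have h2 : V (min (a + 1) A, min (b + 1) A) ≤ V (min (a + 1 + 1) A, min (b + 1) A) :=
    goodV_mono1 hG (min_le_min (by omega) le_rfl) (min_le_right _ _) (min_le_right _ _)
  have C1 := mul_le_mul_of_nonneg_left h1 (by positivity : (0:ℝ) ≤ γ * lams)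
  have C2 := mul_le_mul_of_nonneg_left h2
    (by nlinarith : (0:ℝ) ≤ γ * (lamc - lams))
  have key : QsenseA A γ lams cs V (a, b) - QcommA A γ lamc cc V (a, b) ≤
      QsenseA A γ lams cs V (a + 1, b) - QcommA A γ lamc cc V (a + 1, b) := by
    simp only [QsenseA, QcommA]
    push_cast
    nlinarith
  linarith

lemma step_b {A : ℕ} {γ lams lamc cs cc : ℝ} {V : ℕ × ℕ → ℝ}
    (hγ0 : 0 < γ) (hG : GoodV A lams lamc V) {x b : ℕ} (hbx : b + 1 ≤ x) (hxA : x ≤ A)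
    (h : QsenseA A γ lams cs V (x, b) ≤ QcommA A γ lamc cc V (x, b)) :
    QsenseA A γ lams cs V (x, b + 1) ≤ QcommA A γ lamc cc V (x, b + 1) := by
  have hbA : b + 1 ≤ A := hbx.trans hxA
  have hminb : min (b + 1) A = b + 1 := min_eq_left hbA
  have hP := goodV_Pshift hG hbx hxA
  have hP' := mul_le_mul_of_nonneg_left hP hγ0.le
  have key : (QsenseA A γ lams cs V (x, b + 1) - QcommA A γ lamc cc V (x, b + 1)) -
      (QsenseA A γ lams cs V (x, b) - QcommA A γ lamc cc V (x, b)) =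
      γ * ((lamc - lams) * (V (min (x + 1) A, min (b + 1 + 1) A) - V (min (x + 1) A, b + 1)) -
        lamc * (V (min (b + 1 + 1) A, min (b + 1 + 1) A) - V (b + 1, b + 1))) := by
    simp only [QsenseA, QcommA, hminb]
    ring
  linarith [hP', key.le, key.ge]


/-- The greedy policy w.r.t. the fixed point `V_star` of the truncated Bellman operator
has a monotone threshold structure on the reachable region `a ≥ b` of the grid. -/
theorem optimal_policy_monotone_threshold
    (γ lams lamc cs cc : ℝ) (A : ℕ)
    (hγ0 : 0 < γ) (hγ1 : γ < 1) (hs0 : 0 ≤ lams) (hsc : lams ≤ lamc) (hc1 : lamc ≤ 1)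
    (hcs : 0 ≤ cs) (hcc : 0 ≤ cc) (hA : 2 ≤ A)
    (Vstar : ℕ × ℕ → ℝ)
    (hfix : IsFixedOnGrid A γ lams lamc cs cc Vstar)
    (huniq : ∀ W : ℕ × ℕ → ℝ, IsFixedOnGrid A γ lams lamc cs cc W →
      ∀ a b : ℕ, a ≤ A → b ≤ A → W (a, b) = Vstar (a, b)) :
    ∃ τ : ℕ → WithBot ℕ∞, Monotone τ ∧
      ∀ a b : ℕ, a ≤ A → b ≤ A → b ≤ a →
        (QsenseA A γ lams cs Vstar (a, b) ≤ QcommA A γ lamc cc Vstar (a, b) ↔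
          ((a : ℕ∞) : WithBot ℕ∞) ≤ τ b) := by
  classical
  have hA1 : 1 ≤ A := by omega
  have hG := goodV_star hγ0 hγ1 hs0 hsc hc1 hA1 hfix
  set S : ℕ → Finset ℕ := fun b => (Finset.Icc b A).filter
    (fun a => QsenseA A γ lams cs Vstar (a, b) ≤ QcommA A γ lamc cc Vstar (a, b)) with hSdef
  have memS : ∀ a b : ℕ, a ∈ S b ↔ b ≤ a ∧ a ≤ A ∧
      QsenseA A γ lams cs Vstar (a, b) ≤ QcommA A γ lamc cc Vstar (a, b) := by
    intro a b
    simp [hSdef, Finset.mem_filter, Finset.mem_Icc, and_assoc]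
  have down : ∀ b a m : ℕ, b ≤ a → a ≤ m → m ≤ A →
      QsenseA A γ lams cs Vstar (m, b) ≤ QcommA A γ lamc cc Vstar (m, b) →
      QsenseA A γ lams cs Vstar (a, b) ≤ QcommA A γ lamc cc Vstar (a, b) := by
    intro b a m hba ham
    induction m, ham using Nat.le_induction with
    | base => exact fun _ h => h
    | succ n hn ih =>
        intro hnA hp
        exact ih (by omega) (step_down hγ0 hs0 hsc hc1 hA1 hG hnA
          (le_trans hba (le_trans hn (by omega))) hp)
  have cast_le : ∀ m n : ℕ, (((m : ℕ∞) : WithBot ℕ∞) ≤ ((n : ℕ∞) : WithBot ℕ∞)) ↔ m ≤ n := by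
    intro m n
    rw [WithBot.coe_le_coe, Nat.cast_le]
  set τ : ℕ → WithBot ℕ∞ := fun b => if h : (S b).Nonempty
    then (((S b).max' h : ℕ∞) : WithBot ℕ∞)
    else if b = 0 then ⊥ else (((b - 1 : ℕ) : ℕ∞) : WithBot ℕ∞) with hτdef
  refine ⟨τ, monotone_nat_of_le_succ ?_, ?_⟩
  · intro b
    by_cases h1 : (S b).Nonempty
    · have hm1 := (memS _ _).1 ((S b).max'_mem h1)
      obtain ⟨hbm1, hm1A, hPm1⟩ := hm1
      by_cases h2 : (S (b + 1)).Nonempty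
      · have hm2 := (memS _ _).1 ((S (b + 1)).max'_mem h2)
        simp only [hτdef, dif_pos h1, dif_pos h2]
        rw [cast_le]
        rcases eq_or_lt_of_le hbm1 with heq | hlt
        · omega
        · have hup := step_b hγ0 hG hlt hm1A hPm1
          exact Finset.le_max' _ _ ((memS _ _).2 ⟨hlt, hm1A, hup⟩)
      · have hm1b : (S b).max' h1 = b := by
          rcases eq_or_lt_of_le hbm1 with heq | hlt
          · omega
          · exact absurd ⟨_, (memS _ _).2 ⟨hlt, hm1A, step_b hγ0 hG hlt hm1A hPm1⟩⟩ h2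
        simp only [hτdef, dif_pos h1, dif_neg h2, hm1b]
        rw [if_neg (by omega : ¬ b + 1 = 0)]
        rw [cast_le]
        omega
    · by_cases hb0 : b = 0
      · simp only [hτdef, dif_neg h1, if_pos hb0]
        exact bot_le
      · simp only [hτdef, dif_neg h1, if_neg hb0]
        by_cases h2 : (S (b + 1)).Nonempty
        · have hm2 := (memS _ _).1 ((S (b + 1)).max'_mem h2)
          simp only [dif_pos h2]
          rw [cast_le]
          omega
        · simp only [dif_neg h2, if_neg (by omega : ¬ b + 1 = 0)]
          rw [cast_le]
          omega
  · intro a b haA hbA hba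
    constructor
    · intro h
      have haS : a ∈ S b := (memS _ _).2 ⟨hba, haA, h⟩
      have h1 : (S b).Nonempty := ⟨a, haS⟩
      simp only [hτdef, dif_pos h1]
      exact (cast_le _ _).2 (Finset.le_max' _ a haS)
    · intro h
      by_cases h1 : (S b).Nonempty
      · have ham : a ≤ (S b).max' h1 := by
          rw [← cast_le]
          simpa only [hτdef, dif_pos h1] using h
        have hm1 := (memS _ _).1 ((S b).max'_mem h1)
        exact down b a _ hba ham hm1.2.1 hm1.2.2
      · exfalso
        by_cases hb0 : b = 0
        · simp only [hτdef, dif_neg h1, if_pos hb0] at h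
          exact absurd h (by simp)
        · simp only [hτdef, dif_neg h1, if_neg hb0] at h
          have := (cast_le _ _).1 h
          omega
end

section
/- Suppose V : ℕ × ℕ → ℝ is coordinatewise nondecreasing and submodular. Then there exists a nondecreasing function τ : ℕ → {−∞} ∪ ℕ ∪ {+∞} (with the obvious order) such that for every (a,b) ∈ ℕ × ℕ with a ≥ b, one has Q_sense V (a,b) ≤ Q_comm V (a,b) if and only if a ≤ τ(b). Equivalently, the greedy policy with respect to V has a monotone threshold structure: it senses when a ≤ τ(b) and communicates otherwise, and the switching curve τ is nondecreasing. -/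
noncomputable def Qsense (γ lams cs : ℝ) (V : ℕ × ℕ → ℝ) (p : ℕ × ℕ) : ℝ :=
  (p.1 : ℝ) + cs + γ * (lams * V (p.1 + 1, 1) + (1 - lams) * V (p.1 + 1, p.2 + 1))

noncomputable def Qcomm (γ lamc cc : ℝ) (V : ℕ × ℕ → ℝ) (p : ℕ × ℕ) : ℝ :=
  (p.1 : ℝ) + cc + γ * (lamc * V (p.2 + 1, p.2 + 1) + (1 - lamc) * V (p.1 + 1, p.2 + 1))

noncomputable def Delta (γ lams lamc cs cc : ℝ) (V : ℕ × ℕ → ℝ) (p : ℕ × ℕ) : ℝ :=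
  Qsense γ lams cs V p - Qcomm γ lamc cc V p

noncomputable def Tbell (γ lams lamc cs cc : ℝ) (V : ℕ × ℕ → ℝ) : ℕ × ℕ → ℝ :=
  fun p => min (Qsense γ lams cs V p) (Qcomm γ lamc cc V p)

/-- `V` is nondecreasing in each argument separately. -/
def CoordNondecr (V : ℕ × ℕ → ℝ) : Prop :=
  (∀ a a' b : ℕ, a ≤ a' → V (a, b) ≤ V (a', b)) ∧
  (∀ a b b' : ℕ, b ≤ b' → V (a, b) ≤ V (a, b'))

/-- Submodularity on the lattice `ℕ × ℕ` (componentwise max/min). -/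
def Submodular (W : ℕ × ℕ → ℝ) : Prop :=
  ∀ x y : ℕ × ℕ, W (x ⊔ y) + W (x ⊓ y) ≤ W x + W y

/-!
Write `Δ(a, b) = Q_sense V (a, b) - Q_comm V (a, b)`. Then
`Δ(a, b) = c_s - c_c + γ (λ_s V(a+1, 1) - λ_c V(b+1, b+1) + (λ_c - λ_s) V(a+1, b+1))`.
Monotonicity of `V` makes `Δ` nondecreasing in `a`, so for each `b` the sensing region
`{a ≥ b | Δ(a, b) ≤ 0}` is an initial segment of `[b, ∞)`;
`τ(b)` is the supremum of its union with `[0, b)`.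
On `a > b`, submodularity bounds the increment of `V(a+1, ·)` by that of `V(b+2, ·)`, which
monotonicity bounds by `V(b+2, b+2) - V(b+1, b+1)`; hence `Δ(a, b+1) ≤ Δ(a, b)`, the sensing
region grows with `b`, and `τ` is nondecreasing.
-/

theorem Submodular.add_le_add_of_le {V : ℕ × ℕ → ℝ} (hV : Submodular V) {a a' b b' : ℕ}
    (ha : a ≤ a') (hb : b ≤ b') : V (a', b') + V (a, b) ≤ V (a', b) + V (a, b') := by
  simpa [Prod.mk_sup_mk, Prod.mk_inf_mk, ha, hb] using hV (a', b) (a, b')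

theorem IsLowerSet.natCast_le_iSup_iff {s : Set ℕ} (hs : IsLowerSet s) (a : ℕ) :
    ((a : ℕ∞) : WithBot ℕ∞) ≤ ⨆ n ∈ s, ((n : ℕ∞) : WithBot ℕ∞) ↔ a ∈ s := by
  refine ⟨fun h => ?_, fun ha => le_biSup (fun n : ℕ => ((n : ℕ∞) : WithBot ℕ∞)) ha⟩
  by_contra ha
  have hs_lt : ∀ n ∈ s, n < a := fun n hn => by
    by_contra! han
    exact ha (hs han hn)
  have hsup_lt : (Finset.range a).sup (fun n => ((n : ℕ∞) : WithBot ℕ∞)) < a :=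
    (Finset.sup_lt_iff (WithBot.bot_lt_coe _)).2 fun n hn => by simpa using hn
  rw [Finset.sup_eq_iSup] at hsup_lt
  exact h.not_gt ((biSup_mono fun n hn => by simpa using hs_lt n hn).trans_lt hsup_lt)

theorem exists_monotone_threshold (p : ℕ → ℕ → Prop)
    (hdown : ∀ {a a' b}, b ≤ a → a ≤ a' → p a' b → p a b)
    (hstep : ∀ {a b}, b < a → p a b → p a (b + 1)) :
    ∃ τ : ℕ → WithBot ℕ∞, Monotone τ ∧
      ∀ a b : ℕ, b ≤ a → (p a b ↔ ((a : ℕ∞) : WithBot ℕ∞) ≤ τ b) := by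
  set T : ℕ → Set ℕ := fun b => {a | a < b ∨ p a b}
  have hT_lower : ∀ b, IsLowerSet (T b) := by
    rintro b a' a haa' (ha' | ha')
    · exact Or.inl (haa'.trans_lt ha')
    · rcases lt_or_ge a b with hab | hba
      · exact Or.inl hab
      · exact Or.inr (hdown hba haa' ha')
  have hT_succ : ∀ b, T b ⊆ T (b + 1) := by
    rintro b a (hab | ha)
    · exact Or.inl (by omega)
    · rcases Nat.lt_or_ge b a with hba | hab
      · exact Or.inr (hstep hba ha)
      · exact Or.inl (by omega)
  refine ⟨fun b => ⨆ n ∈ T b, ((n : ℕ∞) : WithBot ℕ∞),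
    monotone_nat_of_le_succ fun b => biSup_mono (hT_succ b), fun a b hba => ?_⟩
  rw [(hT_lower b).natCast_le_iSup_iff]
  simp [T, not_lt.2 hba]

section Delta

variable {γ lams lamc cs cc : ℝ} {V : ℕ × ℕ → ℝ}

theorem Delta_eq (a b : ℕ) :
    Delta γ lams lamc cs cc V (a, b) = cs - cc +
      γ * (lams * V (a + 1, 1) - lamc * V (b + 1, b + 1) + (lamc - lams) * V (a + 1, b + 1)) := by
  simp only [Delta, Qsense, Qcomm]
  ring

theorem Delta_le_Delta_fst (hγ : 0 ≤ γ) (hs0 : 0 ≤ lams) (hsc : lams ≤ lamc)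
    (hV : CoordNondecr V) {a a' : ℕ} (b : ℕ) (ha : a ≤ a') :
    Delta γ lams lamc cs cc V (a, b) ≤ Delta γ lams lamc cs cc V (a', b) := by
  have h₁ := hV.1 (a + 1) (a' + 1) 1 (by omega)
  have h₂ := hV.1 (a + 1) (a' + 1) (b + 1) (by omega)
  rw [Delta_eq, Delta_eq]
  gcongr

theorem Delta_succ_snd_le (hγ : 0 ≤ γ) (hs0 : 0 ≤ lams) (hsc : lams ≤ lamc)
    (hV : CoordNondecr V) (hsub : Submodular V) {a b : ℕ} (hba : b < a) :
    Delta γ lams lamc cs cc V (a, b + 1) ≤ Delta γ lams lamc cs cc V (a, b) := by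
  have hincr : V (a + 1, b + 1 + 1) - V (a + 1, b + 1)
      ≤ V (b + 1 + 1, b + 1 + 1) - V (b + 1 + 1, b + 1) := by
    have := hsub.add_le_add_of_le (a := b + 1 + 1) (a' := a + 1) (b := b + 1) (b' := b + 1 + 1)
      (by omega) (by omega)
    linarith
  have hdiag₁ : V (b + 1, b + 1) ≤ V (b + 1 + 1, b + 1) := hV.1 _ _ _ (by omega)
  have hdiag₂ : V (b + 1 + 1, b + 1) ≤ V (b + 1 + 1, b + 1 + 1) := hV.2 _ _ _ (by omega)
  have key : (lamc - lams) * (V (a + 1, b + 1 + 1) - V (a + 1, b + 1))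
      ≤ lamc * (V (b + 1 + 1, b + 1 + 1) - V (b + 1, b + 1)) :=
    calc (lamc - lams) * (V (a + 1, b + 1 + 1) - V (a + 1, b + 1))
        ≤ (lamc - lams) * (V (b + 1 + 1, b + 1 + 1) - V (b + 1, b + 1)) :=
          mul_le_mul_of_nonneg_left (by linarith) (sub_nonneg.2 hsc)
      _ ≤ lamc * (V (b + 1 + 1, b + 1 + 1) - V (b + 1, b + 1)) :=
          mul_le_mul_of_nonneg_right (by linarith) (by linarith)
  have := mul_le_mul_of_nonneg_left key hγ
  rw [Delta_eq, Delta_eq]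
  linarith

end Delta

theorem greedy_policy_monotone_threshold_general
    (γ lams lamc cs cc : ℝ)
    (hγ0 : 0 < γ) (hs0 : 0 ≤ lams) (hsc : lams ≤ lamc)
    (V : ℕ × ℕ → ℝ) (hmono : CoordNondecr V) (hsub : Submodular V) :
    ∃ τ : ℕ → WithBot ℕ∞, Monotone τ ∧
      ∀ a b : ℕ, b ≤ a →
        (Qsense γ lams cs V (a, b) ≤ Qcomm γ lamc cc V (a, b) ↔
          ((a : ℕ∞) : WithBot ℕ∞) ≤ τ b) := by
  obtain ⟨τ, hτ_mono, hτ⟩ := exists_monotone_threshold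
    (fun a b => Delta γ lams lamc cs cc V (a, b) ≤ 0)
    (fun _ ha h => (Delta_le_Delta_fst hγ0.le hs0 hsc hmono _ ha).trans h)
    (fun hba h => (Delta_succ_snd_le hγ0.le hs0 hsc hmono hsub hba).trans h)
  refine ⟨τ, hτ_mono, fun a b hba => ?_⟩
  rw [← sub_nonpos]
  exact hτ a b hba

/-- For coordinatewise nondecreasing submodular `V`, the greedy policy has a monotone
threshold structure on the reachable region `a ≥ b`. -/
theorem greedy_policy_monotone_threshold
    (γ lams lamc cs cc : ℝ)
    (hγ0 : 0 < γ) (hγ1 : γ < 1) (hs0 : 0 ≤ lams) (hsc : lams ≤ lamc) (hc1 : lamc ≤ 1)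
    (hcs : 0 ≤ cs) (hcc : 0 ≤ cc)
    (V : ℕ × ℕ → ℝ) (hmono : CoordNondecr V) (hsub : Submodular V) :
    ∃ τ : ℕ → WithBot ℕ∞, Monotone τ ∧
      ∀ a b : ℕ, b ≤ a →
        (Qsense γ lams cs V (a, b) ≤ Qcomm γ lamc cc V (a, b) ↔
          ((a : ℕ∞) : WithBot ℕ∞) ≤ τ b) :=
  greedy_policy_monotone_threshold_general γ lams lamc cs cc hγ0 hs0 hsc V hmono hsub
end

section
/- If V : ℕ × ℕ → ℝ is coordinatewise nondecreasing, then T V is coordinatewise nondecreasing, i.e., (T V)(a,b) ≤ (T V)(a',b') whenever a ≤ a' and b ≤ b'. -/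
/-- The Bellman operator preserves coordinatewise monotonicity. -/
theorem bellman_preserves_monotone
    (γ lams lamc cs cc : ℝ)
    (hγ0 : 0 < γ) (hγ1 : γ < 1) (hs0 : 0 ≤ lams) (hsc : lams ≤ lamc) (hc1 : lamc ≤ 1)
    (hcs : 0 ≤ cs) (hcc : 0 ≤ cc)
    (V : ℕ × ℕ → ℝ) (hmono : CoordNondecr V) :
    ∀ a a' b b' : ℕ, a ≤ a' → b ≤ b' →
      Tbell γ lams lamc cs cc V (a, b) ≤ Tbell γ lams lamc cs cc V (a', b') := by
  intro a a' b b' ha hb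
  obtain ⟨hV1, hV2⟩ := hmono
  have hγ : (0:ℝ) ≤ γ := le_of_lt hγ0
  have hs1 : lams ≤ 1 := le_trans hsc hc1
  have hc0 : 0 ≤ lamc := le_trans hs0 hsc
  have hmix : ∀ (x y x' y' : ℕ × ℕ), V x ≤ V x' → V y ≤ V y' →
      ∀ l : ℝ, 0 ≤ l → l ≤ 1 → l * V x + (1 - l) * V y ≤ l * V x' + (1 - l) * V y' := by
    intro x y x' y' hx hy l hl0 hl1
    have h1 : l * V x ≤ l * V x' := mul_le_mul_of_nonneg_left hx hl0
    have h2 : (1 - l) * V y ≤ (1 - l) * V y' := mul_le_mul_of_nonneg_left hy (by linarith)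
    linarith
  have hVV : ∀ x y x' y' : ℕ, x ≤ x' → y ≤ y' → V (x, y) ≤ V (x', y') := by
    intro x y x' y' hx hy
    exact le_trans (hV1 x x' y hx) (hV2 x' y y' hy)
  apply min_le_min
  · unfold Qsense
    simp only
    have := hmix (a+1, 1) (a+1, b+1) (a'+1, 1) (a'+1, b'+1)
      (hVV _ _ _ _ (by omega) le_rfl) (hVV _ _ _ _ (by omega) (by omega)) lams hs0 hs1
    have hcast : (a:ℝ) ≤ (a':ℝ) := Nat.cast_le.mpr ha
    have := mul_le_mul_of_nonneg_left this hγ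
    linarith
  · unfold Qcomm
    simp only
    have := hmix (b+1, b+1) (a+1, b+1) (b'+1, b'+1) (a'+1, b'+1)
      (hVV _ _ _ _ (by omega) (by omega)) (hVV _ _ _ _ (by omega) (by omega)) lamc hc0 hc1
    have hcast : (a:ℝ) ≤ (a':ℝ) := Nat.cast_le.mpr ha
    have := mul_le_mul_of_nonneg_left this hγ
    linarith
end

section
/- If V : ℕ × ℕ → ℝ is submodular, then both action-value functions Q_sense V and Q_comm V are submodular on ℕ × ℕ. -/
lemma diag_sum (f : ℕ → ℝ) (a b : ℕ) : f (max a b) + f (min a b) = f a + f b := by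
  rcases le_total a b with h | h <;>
    simp [max_eq_right, max_eq_left, min_eq_left, min_eq_right, h, add_comm]

lemma sup_shift (x y : ℕ × ℕ) :
    (x.1 + 1, x.2 + 1) ⊔ (y.1 + 1, y.2 + 1) = ((x ⊔ y).1 + 1, (x ⊔ y).2 + 1) := by
  refine Prod.ext ?_ ?_ <;> simp [Prod.sup_def] <;> omega

lemma inf_shift (x y : ℕ × ℕ) :
    (x.1 + 1, x.2 + 1) ⊓ (y.1 + 1, y.2 + 1) = ((x ⊓ y).1 + 1, (x ⊓ y).2 + 1) := by
  refine Prod.ext ?_ ?_ <;> simp [Prod.inf_def] <;> omega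

/-- If `V` is submodular then both action-value functions are submodular. -/
theorem actionValue_submodular
    (γ lams lamc cs cc : ℝ)
    (hγ0 : 0 < γ) (hγ1 : γ < 1) (hs0 : 0 ≤ lams) (hsc : lams ≤ lamc) (hc1 : lamc ≤ 1)
    (hcs : 0 ≤ cs) (hcc : 0 ≤ cc)
    (V : ℕ × ℕ → ℝ) (hsub : Submodular V) :
    Submodular (Qsense γ lams cs V) ∧ Submodular (Qcomm γ lamc cc V) := by
  have hs1 : lams ≤ 1 := le_trans hsc hc1
  have hc0 : 0 ≤ lamc := le_trans hs0 hsc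
  constructor
  · intro x y
    have hV := hsub (x.1 + 1, x.2 + 1) (y.1 + 1, y.2 + 1)
    rw [sup_shift, inf_shift] at hV
    have h1 := diag_sum (fun a => V (a + 1, 1)) x.1 y.1
    have hfst : ((x ⊔ y).1 : ℝ) + ((x ⊓ y).1 : ℝ) = (x.1 : ℝ) + (y.1 : ℝ) := by
      have : (x ⊔ y).1 + (x ⊓ y).1 = x.1 + y.1 := by
        simp only [Prod.sup_def, Prod.inf_def]; omega
      exact_mod_cast this
    have h3 := mul_le_mul_of_nonneg_left hV
      (mul_nonneg hγ0.le (by linarith : (0:ℝ) ≤ 1 - lams))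
    simp only [Qsense, Prod.sup_def, Prod.inf_def] at *
    have h1' : γ * lams * (V (x.1 ⊔ y.1 + 1, 1) + V (x.1 ⊓ y.1 + 1, 1))
        = γ * lams * (V (x.1 + 1, 1) + V (y.1 + 1, 1)) := by rw [h1]
    nlinarith [h1', hfst, h3]
  · intro x y
    have hV := hsub (x.1 + 1, x.2 + 1) (y.1 + 1, y.2 + 1)
    rw [sup_shift, inf_shift] at hV
    have h2 := diag_sum (fun b => V (b + 1, b + 1)) x.2 y.2
    have hfst : ((x ⊔ y).1 : ℝ) + ((x ⊓ y).1 : ℝ) = (x.1 : ℝ) + (y.1 : ℝ) := by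
      have : (x ⊔ y).1 + (x ⊓ y).1 = x.1 + y.1 := by
        simp only [Prod.sup_def, Prod.inf_def]; omega
      exact_mod_cast this
    have h3 := mul_le_mul_of_nonneg_left hV
      (mul_nonneg hγ0.le (by linarith : (0:ℝ) ≤ 1 - lamc))
    simp only [Qcomm, Prod.sup_def, Prod.inf_def] at *
    have h2' : γ * lamc * (V (x.2 ⊔ y.2 + 1, x.2 ⊔ y.2 + 1) + V (x.2 ⊓ y.2 + 1, x.2 ⊓ y.2 + 1))
        = γ * lamc * (V (x.2 + 1, x.2 + 1) + V (y.2 + 1, y.2 + 1)) := by rw [h2]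
    nlinarith [h2', hfst, h3]
end

section
/- If V : ℕ × ℕ → ℝ is coordinatewise nondecreasing, then for each fixed b ∈ ℕ the action difference Δ_V(a,b) is nondecreasing in a, i.e., Δ_V(a+1,b) ≥ Δ_V(a,b) for all a ∈ ℕ. -/
/-- The action difference is nondecreasing in the source age. -/
theorem delta_nondecreasing_in_source_age
    (γ lams lamc cs cc : ℝ)
    (hγ0 : 0 < γ) (hγ1 : γ < 1) (hs0 : 0 ≤ lams) (hsc : lams ≤ lamc) (hc1 : lamc ≤ 1)
    (hcs : 0 ≤ cs) (hcc : 0 ≤ cc)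
    (V : ℕ × ℕ → ℝ) (hmono : CoordNondecr V) :
    ∀ a b : ℕ, Delta γ lams lamc cs cc V (a, b) ≤ Delta γ lams lamc cs cc V (a + 1, b) := by
  intro a b
  have h1 : V (a + 1, 1) ≤ V (a + 1 + 1, 1) := hmono.1 _ _ _ (by omega)
  have h2 : V (a + 1, b + 1) ≤ V (a + 1 + 1, b + 1) := hmono.1 _ _ _ (by omega)
  simp only [Delta, Qsense, Qcomm]
  push_cast
  nlinarith [mul_le_mul_of_nonneg_left h1 hs0,
    mul_le_mul_of_nonneg_left h2 (sub_nonneg.2 hsc), hγ0.le,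
    mul_le_mul_of_nonneg_left (add_le_add (mul_le_mul_of_nonneg_left h1 hs0)
      (mul_le_mul_of_nonneg_left h2 (sub_nonneg.2 hsc))) hγ0.le]
end

section
/- If V : ℕ × ℕ → ℝ is coordinatewise nondecreasing and submodular, then for every (a,b) ∈ ℕ × ℕ with a ≥ b the action difference is nonincreasing in the second coordinate: Δ_V(a,b+1) ≤ Δ_V(a,b). -/
/-!
Writing `D` for the increment of `V` in its second coordinate at `(a + 1, b + 1)` and `E` for its
increment along the diagonal from `(b + 1, b + 1)` to `(b + 2, b + 2)`, one has
`Δ(a, b + 1) - Δ(a, b) = γ ((λc - λs) D - λc E)`. Monotonicity gives `0 ≤ D`, and submodularity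
(decreasing differences) followed by monotonicity in the first coordinate gives `D ≤ E` when
`b ≤ a`; since `0 ≤ λc - λs ≤ λc`, the bracket is nonpositive.
-/

theorem Submodular.sub_le_sub_of_fst_le {V : ℕ × ℕ → ℝ} (hV : Submodular V) {a a' b : ℕ}
    (ha : a' ≤ a) : V (a, b + 1) - V (a, b) ≤ V (a', b + 1) - V (a', b) := by
  have h := hV (a, b) (a', b + 1)
  simp only [Prod.mk_sup_mk, Prod.mk_inf_mk, max_eq_left ha, min_eq_right ha,
    max_eq_right (Nat.le_succ b), min_eq_left (Nat.le_succ b)] at h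
  linarith

theorem Delta_succ_snd_sub (γ lams lamc cs cc : ℝ) (V : ℕ × ℕ → ℝ) (a b : ℕ) :
    Delta γ lams lamc cs cc V (a, b + 1) - Delta γ lams lamc cs cc V (a, b) =
      γ * ((lamc - lams) * (V (a + 1, b + 2) - V (a + 1, b + 1))
        - lamc * (V (b + 2, b + 2) - V (b + 1, b + 1))) := by
  simp only [Delta, Qsense, Qcomm]
  ring

theorem delta_nonincreasing_in_bs_age_general
    (γ lams lamc cs cc : ℝ)
    (hγ0 : 0 < γ) (hs0 : 0 ≤ lams) (hsc : lams ≤ lamc)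
    (V : ℕ × ℕ → ℝ) (hmono : CoordNondecr V) (hsub : Submodular V) :
    ∀ a b : ℕ, b ≤ a →
      Delta γ lams lamc cs cc V (a, b + 1) ≤ Delta γ lams lamc cs cc V (a, b) := by
  intro a b hba
  have hinc : 0 ≤ V (a + 1, b + 2) - V (a + 1, b + 1) :=
    sub_nonneg.2 (hmono.2 _ _ _ (by omega))
  have hdiag : V (a + 1, b + 2) - V (a + 1, b + 1) ≤ V (b + 2, b + 2) - V (b + 1, b + 1) := by
    have hfst := hmono.1 (b + 1) (b + 2) (b + 2) (by omega)
    have hdd := hsub.sub_le_sub_of_fst_le (b := b + 1) (show b + 1 ≤ a + 1 by omega)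
    linarith
  rw [← sub_nonpos, Delta_succ_snd_sub]
  exact mul_nonpos_of_nonneg_of_nonpos hγ0.le (by nlinarith)

/-- On the reachable region `a ≥ b`, the action difference is nonincreasing in the
base-station age. -/
theorem delta_nonincreasing_in_bs_age
    (γ lams lamc cs cc : ℝ)
    (hγ0 : 0 < γ) (hγ1 : γ < 1) (hs0 : 0 ≤ lams) (hsc : lams ≤ lamc) (hc1 : lamc ≤ 1)
    (hcs : 0 ≤ cs) (hcc : 0 ≤ cc)
    (V : ℕ × ℕ → ℝ) (hmono : CoordNondecr V) (hsub : Submodular V) :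
    ∀ a b : ℕ, b ≤ a →
      Delta γ lams lamc cs cc V (a, b + 1) ≤ Delta γ lams lamc cs cc V (a, b) :=
  delta_nonincreasing_in_bs_age_general γ lams lamc cs cc hγ0 hs0 hsc V hmono hsub
end

section
/- If V : ℕ × ℕ → ℝ is coordinatewise nondecreasing and submodular, then for every (a,b) ∈ ℕ × ℕ with a ≥ b the vertical forward difference of Δ_V satisfies the bound Δ_V(a,b+1) − Δ_V(a,b) ≤ −γ·λ_s·(V(b+2,b+2) − V(b+1,b+1)), and in particular this quantity is at most 0. -/
theorem CoordNondecr.monotone {V : ℕ × ℕ → ℝ} (hV : CoordNondecr V) : Monotone V := by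
  rintro ⟨a, b⟩ ⟨a', b'⟩ ⟨ha, hb⟩
  exact (hV.1 a a' b ha).trans (hV.2 a' b b' hb)

theorem Submodular.sub_snd_antitone {W : ℕ × ℕ → ℝ} (hW : Submodular W) {a a' b b' : ℕ}
    (ha : a ≤ a') (hb : b ≤ b') : W (a', b') - W (a', b) ≤ W (a, b') - W (a, b) := by
  have h := hW (a', b) (a, b')
  rw [Prod.mk_sup_mk, Prod.mk_inf_mk, sup_eq_left.2 ha, sup_eq_right.2 hb,
    inf_eq_right.2 ha, inf_eq_left.2 hb] at h
  linarith

theorem Delta_succ_snd_sub_Delta (γ lams lamc cs cc : ℝ) (V : ℕ × ℕ → ℝ) (a b : ℕ) :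
    Delta γ lams lamc cs cc V (a, b + 1) - Delta γ lams lamc cs cc V (a, b) =
      γ * (lamc - lams) *
          ((V (a + 1, b + 2) - V (a + 1, b + 1)) - (V (b + 2, b + 2) - V (b + 1, b + 1))) -
        γ * lams * (V (b + 2, b + 2) - V (b + 1, b + 1)) := by
  simp only [Delta, Qsense, Qcomm]
  ring

theorem delta_vertical_difference_bound_general
    (γ lams lamc cs cc : ℝ)
    (hγ0 : 0 < γ) (hs0 : 0 ≤ lams) (hsc : lams ≤ lamc)
    (V : ℕ × ℕ → ℝ) (hmono : CoordNondecr V) (hsub : Submodular V) :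
    ∀ a b : ℕ, b ≤ a →
      Delta γ lams lamc cs cc V (a, b + 1) - Delta γ lams lamc cs cc V (a, b) ≤
          -(γ * lams * (V (b + 2, b + 2) - V (b + 1, b + 1))) ∧
      Delta γ lams lamc cs cc V (a, b + 1) - Delta γ lams lamc cs cc V (a, b) ≤ 0 := by
  intro a b hab
  have hdiag : 0 ≤ V (b + 2, b + 2) - V (b + 1, b + 1) :=
    sub_nonneg.2 (hmono.monotone ⟨by omega, by omega⟩)
  have hcross : V (a + 1, b + 2) - V (a + 1, b + 1) ≤ V (b + 2, b + 2) - V (b + 1, b + 1) :=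
    calc V (a + 1, b + 2) - V (a + 1, b + 1)
        ≤ V (b + 1, b + 2) - V (b + 1, b + 1) := hsub.sub_snd_antitone (by omega) (by omega)
      _ ≤ V (b + 2, b + 2) - V (b + 1, b + 1) := by
        gcongr
        exact hmono.1 _ _ _ (by omega)
  have hcross_term : γ * (lamc - lams) *
      ((V (a + 1, b + 2) - V (a + 1, b + 1)) - (V (b + 2, b + 2) - V (b + 1, b + 1))) ≤ 0 :=
    mul_nonpos_of_nonneg_of_nonpos (mul_nonneg hγ0.le (sub_nonneg.2 hsc)) (sub_nonpos.2 hcross)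
  have hdiag_term : 0 ≤ γ * lams * (V (b + 2, b + 2) - V (b + 1, b + 1)) :=
    mul_nonneg (mul_nonneg hγ0.le hs0) hdiag
  rw [Delta_succ_snd_sub_Delta]
  exact ⟨by linarith, by linarith⟩

/-- Bound on the vertical forward difference of the action difference. -/
theorem delta_vertical_difference_bound
    (γ lams lamc cs cc : ℝ)
    (hγ0 : 0 < γ) (hγ1 : γ < 1) (hs0 : 0 ≤ lams) (hsc : lams ≤ lamc) (hc1 : lamc ≤ 1)
    (hcs : 0 ≤ cs) (hcc : 0 ≤ cc)
    (V : ℕ × ℕ → ℝ) (hmono : CoordNondecr V) (hsub : Submodular V) :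
    ∀ a b : ℕ, b ≤ a →
      Delta γ lams lamc cs cc V (a, b + 1) - Delta γ lams lamc cs cc V (a, b) ≤
          -(γ * lams * (V (b + 2, b + 2) - V (b + 1, b + 1))) ∧
      Delta γ lams lamc cs cc V (a, b + 1) - Delta γ lams lamc cs cc V (a, b) ≤ 0 :=
  delta_vertical_difference_bound_general γ lams lamc cs cc hγ0 hs0 hsc V hmono hsub
end
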